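/- arXiv:2412.12937 — 3 statements merged into one kernel-verified Lean document; each statement's English description precedes it below -/
import Mathlib

section
/- For α > 0, x ≥ 0 and real y with 0 < y < 1, the series G_α(x,y) := Σ_{n=0}^∞ G_{α+n}(x) y^n converges and equals (1-y)^{-1} (G_α(x) - y^{1-α} e^{(y-1)x} G_α(xy)). -/
/-!
Integration by parts gives `G (β + 1) x = G β x - e⁻ˣ xᵝ / Γ(β + 1)`, so `Tₙ := G (α + n) x`
decreases by `e⁻ˣ aₙ(x)` with `aₙ(x) = x^(α+n) / Γ(α+n+1)`, and `Tₙ → 0` gives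
`Σ aₙ(x) = eˣ G α x`. Summation by parts against the geometric series,
`(1 - y) Σ Tₙ yⁿ = T₀ - y Σ (Tₙ - Tₙ₊₁) yⁿ`, reduces the claim to `Σ aₙ(x) yⁿ`, which is
`y^(-α) Σ aₙ(xy) = y^(-α) e^(xy) G α (xy)`.
-/

noncomputable def G (β x : ℝ) : ℝ := (1 / Real.Gamma β) * ∫ t in (0:ℝ)..x, Real.exp (-t) * t ^ (β - 1)

open Real Filter Topology Set

theorem hasSum_mul_pow_of_succ_eq_sub {K : Type*} [Field K] [TopologicalSpace K]
    [IsTopologicalRing K] [T2Space K] {T d : ℕ → K} {y D : K} (hy : y ≠ 1)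
    (hrec : ∀ n, T (n + 1) = T n - d n) (hT : Summable fun n => T n * y ^ n)
    (hd : HasSum (fun n => d n * y ^ n) D) :
    HasSum (fun n => T n * y ^ n) ((1 - y)⁻¹ * (T 0 - y * D)) := by
  obtain ⟨S, hS⟩ := hT
  have hshift : HasSum (fun n => T (n + 1) * y ^ (n + 1)) (S - T 0) := by
    simpa using (hasSum_nat_add_iff' 1).mpr hS
  have hrecsum : HasSum (fun n => T (n + 1) * y ^ (n + 1)) (y * S - y * D) := by
    have hterm (n : ℕ) : T (n + 1) * y ^ (n + 1) = y * (T n * y ^ n) - y * (d n * y ^ n) := by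
      rw [hrec]; ring
    simpa only [hterm] using (hS.mul_left y).sub (hd.mul_left y)
  have hS_eq : S = (1 - y)⁻¹ * (T 0 - y * D) := by
    rw [eq_inv_mul_iff_mul_eq₀ (sub_ne_zero.mpr hy.symm)]
    linear_combination hshift.unique hrecsum
  rwa [← hS_eq]

theorem G_nonneg {β x : ℝ} (hβ : 0 < β) (hx : 0 ≤ x) : 0 ≤ G β x := by
  have := Gamma_pos_of_pos hβ
  refine mul_nonneg (by positivity) (intervalIntegral.integral_nonneg hx fun t ht => ?_)
  have : 0 ≤ t := ht.1
  positivity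

theorem G_le_rpow_div_Gamma {β x : ℝ} (hβ : 0 < β) (hx : 0 ≤ x) :
    G β x ≤ x ^ β / Gamma (β + 1) := by
  have hΓ := Gamma_pos_of_pos hβ
  have hint : IntervalIntegrable (fun t => exp (-t) * t ^ (β - 1)) MeasureTheory.volume 0 x := by
    rw [intervalIntegrable_iff_integrableOn_Ioc_of_le hx]
    exact (GammaIntegral_convergent hβ).mono_set Ioc_subset_Ioi_self
  have hmono : (∫ t in (0:ℝ)..x, exp (-t) * t ^ (β - 1)) ≤ ∫ t in (0:ℝ)..x, t ^ (β - 1) := by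
    refine intervalIntegral.integral_mono_on hx hint
      (intervalIntegral.intervalIntegrable_rpow' (by linarith)) fun t ht => ?_
    exact mul_le_of_le_one_left (rpow_nonneg ht.1 _) (exp_le_one_iff.mpr (by linarith [ht.1]))
  have hpow : (∫ t in (0:ℝ)..x, t ^ (β - 1)) = x ^ β / β := by
    rw [integral_rpow (Or.inl (by linarith)), sub_add_cancel, zero_rpow hβ.ne', sub_zero]
  calc G β x ≤ 1 / Gamma β * (x ^ β / β) := by
        rw [G, ← hpow]; exact mul_le_mul_of_nonneg_left hmono (by positivity)
    _ = x ^ β / Gamma (β + 1) := by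
        rw [Gamma_add_one hβ.ne']; field_simp

theorem ofReal_integral_exp_neg_mul_rpow {β x : ℝ} (hx : 0 ≤ x) :
    ((∫ t in (0:ℝ)..x, exp (-t) * t ^ (β - 1) : ℝ) : ℂ) = Complex.partialGamma β x := by
  rw [Complex.partialGamma, ← intervalIntegral.integral_ofReal]
  refine intervalIntegral.integral_congr fun t ht => ?_
  rw [uIcc_of_le hx] at ht
  push_cast [Complex.ofReal_cpow ht.1]
  rfl

theorem G_add_one {β x : ℝ} (hβ : 0 < β) (hx : 0 ≤ x) :
    G (β + 1) x = G β x - exp (-x) * x ^ β / Gamma (β + 1) := by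
  have hrec : (∫ t in (0:ℝ)..x, exp (-t) * t ^ (β + 1 - 1))
      = β * (∫ t in (0:ℝ)..x, exp (-t) * t ^ (β - 1)) - exp (-x) * x ^ β := by
    apply Complex.ofReal_injective
    push_cast [ofReal_integral_exp_neg_mul_rpow hx, Complex.ofReal_cpow hx]
    exact_mod_cast Complex.partialGamma_add_one (s := β) (by simpa using hβ) hx
  have := Gamma_pos_of_pos hβ
  rw [G, G, hrec, Gamma_add_one hβ.ne']
  field_simp

theorem G_add_nat {β x : ℝ} (hβ : 0 < β) (hx : 0 ≤ x) (n : ℕ) :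
    G (β + n) x = G β x - exp (-x) * ∑ k ∈ Finset.range n, x ^ (β + k) / Gamma (β + k + 1) := by
  induction n with
  | zero => simp
  | succ n ih =>
    rw [Nat.cast_succ, ← add_assoc, G_add_one (by positivity) hx, ih, Finset.sum_range_succ]
    ring

theorem G_add_nat_le {β x : ℝ} (hβ : 0 < β) (hx : 0 ≤ x) (n : ℕ) : G (β + n) x ≤ G β x := by
  rw [G_add_nat hβ hx]
  refine sub_le_self _ (mul_nonneg (exp_pos _).le (Finset.sum_nonneg fun k _ => ?_))
  have := Gamma_pos_of_pos (show 0 < β + k + 1 by positivity)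
  positivity

theorem tendsto_G_add_nat_atTop {β x : ℝ} (hβ : 0 < β) (hx : 0 ≤ x) :
    Tendsto (fun n : ℕ => G (β + n) x) atTop (𝓝 0) := by
  refine squeeze_zero' (.of_forall fun n => G_nonneg (by positivity) hx) ?_
    (by simpa using (FloorSemiring.tendsto_pow_div_factorial_atTop x).const_mul (x ^ β))
  filter_upwards [eventually_ge_atTop 1] with n hn
  have hn' : (1 : ℝ) ≤ n := by exact_mod_cast hn
  have hfac : (n.factorial : ℝ) ≤ Gamma (β + n + 1) := by
    rw [← Gamma_nat_eq_factorial]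
    exact Gamma_strictMonoOn_Ici.monotoneOn (by simp; linarith) (by simp; linarith)
      (by linarith)
  calc G (β + n) x ≤ x ^ (β + n) / Gamma (β + n + 1) := G_le_rpow_div_Gamma (by positivity) hx
    _ = x ^ β * x ^ n / Gamma (β + n + 1) := by
        rw [rpow_add' hx (show β + (n : ℝ) ≠ 0 by positivity), rpow_natCast]
    _ ≤ x ^ β * (x ^ n / n.factorial) := by
        rw [← mul_div_assoc]
        exact div_le_div_of_nonneg_left (by positivity) (by positivity) hfac

theorem hasSum_rpow_div_Gamma {β x : ℝ} (hβ : 0 < β) (hx : 0 ≤ x) :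
    HasSum (fun k : ℕ => x ^ (β + k) / Gamma (β + k + 1)) (exp x * G β x) := by
  have hnonneg (k : ℕ) : 0 ≤ x ^ (β + k) / Gamma (β + k + 1) := by
    have := Gamma_pos_of_pos (show 0 < β + k + 1 by positivity)
    positivity
  have hpartial (n : ℕ) : ∑ k ∈ Finset.range n, x ^ (β + k) / Gamma (β + k + 1)
      = exp x * (G β x - G (β + n) x) := by
    rw [G_add_nat hβ hx, sub_sub_cancel, ← mul_assoc, ← exp_add, add_neg_cancel, exp_zero,
      one_mul]
  rw [hasSum_iff_tendsto_nat_of_nonneg hnonneg]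
  simpa [hpartial] using ((tendsto_G_add_nat_atTop hβ hx).const_sub (G β x)).const_mul (exp x)

theorem hasSum_rpow_div_Gamma_mul_pow {β x y : ℝ} (hβ : 0 < β) (hx : 0 ≤ x) (hy : 0 < y) :
    HasSum (fun k : ℕ => x ^ (β + k) / Gamma (β + k + 1) * y ^ k)
      (y ^ (-β) * (exp (x * y) * G β (x * y))) := by
  have hterm (k : ℕ) : x ^ (β + k) / Gamma (β + k + 1) * y ^ k
      = y ^ (-β) * ((x * y) ^ (β + k) / Gamma (β + k + 1)) := by
    rw [mul_rpow hx hy.le, ← rpow_natCast, mul_div_assoc, rpow_add hy, rpow_neg hy.le]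
    field_simp
  simpa only [hterm] using (hasSum_rpow_div_Gamma hβ (mul_nonneg hx hy.le)).mul_left (y ^ (-β))

theorem stmt_2 (α x y : ℝ) (hα : 0 < α) (hx : 0 ≤ x) (hy0 : 0 < y) (hy1 : y < 1) :
    HasSum (fun n : ℕ => G (α + n) x * y ^ n)
      ((1 - y)⁻¹ * (G α x - y ^ (1 - α) * Real.exp ((y - 1) * x) * G α (x * y))) := by
  set a : ℕ → ℝ := fun k => x ^ (α + k) / Gamma (α + k + 1)
  have hrec (n : ℕ) : G (α + ↑(n + 1)) x = G (α + n) x - exp (-x) * a n := by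
    rw [Nat.cast_succ, ← add_assoc, G_add_one (by positivity) hx]
    ring
  have hsummable : Summable fun n : ℕ => G (α + n) x * y ^ n :=
    ((summable_geometric_of_lt_one hy0.le hy1).mul_left (G α x)).of_nonneg_of_le
      (fun n => mul_nonneg (G_nonneg (by positivity) hx) (pow_nonneg hy0.le n))
      (fun n => mul_le_mul_of_nonneg_right (G_add_nat_le hα hx n) (pow_nonneg hy0.le n))
  have hdecrement : HasSum (fun n => exp (-x) * a n * y ^ n)
      (exp (-x) * (y ^ (-α) * (exp (x * y) * G α (x * y)))) := by
    simpa only [mul_assoc] using (hasSum_rpow_div_Gamma_mul_pow hα hx hy0).mul_left (exp (-x))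
  have hvalue : y ^ (1 - α) * exp ((y - 1) * x) * G α (x * y)
      = y * (exp (-x) * (y ^ (-α) * (exp (x * y) * G α (x * y)))) := by
    rw [sub_eq_add_neg 1 α, rpow_add hy0, rpow_one,
      show (y - 1) * x = -x + x * y by ring, exp_add]
    ring
  rw [hvalue]
  simpa using hasSum_mul_pow_of_succ_eq_sub hy1.ne hrec hsummable hdecrement
end

section
/- For α > 0 and x ≥ 0, the limit as y → 1⁻ of (1-y)^{-1}(G_α(x) - y^{1-α} e^{(y-1)x} G_α(xy)) equals x g_α(x) + (1 + x - α) G_α(x). -/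
noncomputable def g (β x : ℝ) : ℝ := Real.exp (-x) * x ^ (β - 1) / Real.Gamma β

/-! The expression is the left difference quotient at `y = 1` of
`F y = y ^ (1 - α) * exp ((y - 1) * x) * G α (x * y)`, since `F 1 = G α x`. By the product rule
and the fundamental theorem of calculus (`G α' = g α` on `(0, ∞)`),
`F' 1 = (1 - α) G α x + x G α x + x g α x`. -/

open Filter Topology Real

theorem HasDerivAt.tendsto_inv_sub_mul_sub_nhdsLT {f : ℝ → ℝ} {f' a : ℝ} (h : HasDerivAt f f' a) :
    Tendsto (fun y => (a - y)⁻¹ * (f a - f y)) (𝓝[<] a) (𝓝 f') := by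
  refine (hasDerivAt_iff_tendsto_slope_left_right.mp h).1.congr fun y => ?_
  rw [slope_def_field, ← neg_sub a y, ← neg_sub (f a) (f y), neg_div_neg_eq, div_eq_inv_mul]

theorem hasDerivAt_G {α x : ℝ} (hα : 0 < α) (hx : 0 < x) : HasDerivAt (G α) (g α x) x := by
  have hcont : ContinuousOn (fun t : ℝ => exp (-t) * t ^ (α - 1)) (Set.Ioi 0) := fun t ht =>
    (continuous_exp.comp continuous_neg).continuousAt.mul
      (continuousAt_rpow_const t (α - 1) (Or.inl ht.ne')) |>.continuousWithinAt
  have hint : IntervalIntegrable (fun t : ℝ => exp (-t) * t ^ (α - 1)) MeasureTheory.volume 0 x :=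
    (intervalIntegral.intervalIntegrable_rpow' (by linarith : (-1:ℝ) < α - 1)).continuousOn_mul
      (continuous_exp.comp continuous_neg).continuousOn
  have hFTC := intervalIntegral.integral_hasDerivAt_right hint
    ⟨Set.Ioi 0, Ioi_mem_nhds hx, hcont.aestronglyMeasurable measurableSet_Ioi⟩
    ((hcont x hx).continuousAt (Ioi_mem_nhds hx))
  exact (hFTC.const_mul (1 / Gamma α)).congr_deriv (by rw [g]; ring)

theorem hasDerivAt_G_mul {α x : ℝ} (hα : 0 < α) (hx : 0 ≤ x) :
    HasDerivAt (fun y => G α (x * y)) (x * g α x) 1 := by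
  -- `G α` need not be differentiable at `0`, but for `x = 0` the function is constant.
  rcases hx.eq_or_lt with rfl | hx
  · simpa [G] using hasDerivAt_const (1 : ℝ) (0 : ℝ)
  · have h := (hasDerivAt_G hα (by simpa using hx) : HasDerivAt (G α) _ (x * 1)).comp 1
      ((hasDerivAt_id 1).const_mul x)
    exact h.congr_deriv (by rw [mul_one, mul_comm])

theorem hasDerivAt_rpow_mul_exp_mul_G {α x : ℝ} (hα : 0 < α) (hx : 0 ≤ x) :
    HasDerivAt (fun y => y ^ (1 - α) * exp ((y - 1) * x) * G α (x * y))
      (x * g α x + (1 + x - α) * G α x) 1 := by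
  have hpow : HasDerivAt (fun y : ℝ => y ^ (1 - α)) (1 - α) 1 := by
    simpa using hasDerivAt_rpow_const (x := 1) (p := 1 - α) (Or.inl one_ne_zero)
  have hexp : HasDerivAt (fun y : ℝ => exp ((y - 1) * x)) x 1 := by
    simpa using (((hasDerivAt_id (1:ℝ)).sub_const 1).mul_const x).exp
  refine ((hpow.mul hexp).mul (hasDerivAt_G_mul hα hx)).congr_deriv ?_
  simp only [sub_self, zero_mul, exp_zero, mul_one, one_rpow, one_mul, Pi.mul_apply]
  ring

theorem stmt_3 (α x : ℝ) (hα : 0 < α) (hx : 0 ≤ x) :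
    Filter.Tendsto
      (fun y : ℝ => (1 - y)⁻¹ * (G α x - y ^ (1 - α) * Real.exp ((y - 1) * x) * G α (x * y)))
      (nhdsWithin 1 (Set.Iio 1))
      (nhds (x * g α x + (1 + x - α) * G α x)) := by
  simpa using (hasDerivAt_rpow_mul_exp_mul_G hα hx).tendsto_inv_sub_mul_sub_nhdsLT
end

section
/- Let λ_1, …, λ_k > 0, α_1, …, α_k > 0, v := (1/2)(1/max λ_j + 1/min λ_j), z := (1 + t/v)^{-1} for t ≥ 0, α := Σ α_j, and c_j := 1 - 1/(vλ_j). Then ∏_{j=1}^k (1 + λ_j t)^{-α_j} = (v^{-α} ∏_j λ_j^{-α_j}) · z^α · ∏_{j=1}^k (1 - c_j z)^{-α_j}. -/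
theorem stmt_8 (k : ℕ) (hk : 0 < k) (lam a : Fin k → ℝ) (hlam : ∀ j, 0 < lam j)
    (ha : ∀ j, 0 < a j) (t : ℝ) (ht : 0 ≤ t)
    (lmax lmin : ℝ) (hmax : IsGreatest (Set.range lam) lmax) (hmin : IsLeast (Set.range lam) lmin)
    (v z α : ℝ) (hv : v = (lmax⁻¹ + lmin⁻¹) / 2) (hz : z = (1 + t / v)⁻¹)
    (hα : α = ∑ j, a j) (c : Fin k → ℝ) (hc : ∀ j, c j = 1 - 1 / (v * lam j)) :
    ∏ j, (1 + lam j * t) ^ (-(a j)) =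
      (v ^ (-α) * ∏ j, (lam j) ^ (-(a j))) * z ^ α * ∏ j, (1 - c j * z) ^ (-(a j)) := by
  have hlmax : 0 < lmax := by obtain ⟨j, hj⟩ := hmax.1; exact hj ▸ hlam j
  have hlmin : 0 < lmin := by obtain ⟨j, hj⟩ := hmin.1; exact hj ▸ hlam j
  have hv0 : 0 < v := by rw [hv]; positivity
  have hw0 : 0 < 1 + t / v := by positivity
  have hz0 : 0 < z := by rw [hz]; positivity
  have key : ∀ j, 1 + lam j * t = (v * lam j) * (1 + t / v) * (1 - c j * z) := by
    intro j
    have hl := hlam j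
    rw [hc, hz]
    field_simp
    ring
  have h1 : ∀ j, 0 < 1 + lam j * t := fun j => by have := hlam j; positivity
  have h2 : ∀ j, 0 < 1 - c j * z := by
    intro j
    have h := h1 j
    rw [key j] at h
    have hvl : 0 < (v * lam j) * (1 + t / v) := by have := hlam j; positivity
    by_contra hcon
    push_neg at hcon
    nlinarith
  have hzw : z ^ α = (1 + t / v) ^ (-α) := by
    rw [hz, ← Real.rpow_neg_one, ← Real.rpow_mul hw0.le]
    ring_nf
  calc ∏ j, (1 + lam j * t) ^ (-(a j))
      = ∏ j, (v ^ (-(a j)) * (lam j) ^ (-(a j)) * (1 + t / v) ^ (-(a j))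
          * (1 - c j * z) ^ (-(a j))) := by
        refine Finset.prod_congr rfl fun j _ => ?_
        have hl := hlam j
        rw [key j, Real.mul_rpow (by positivity) (h2 j).le,
          Real.mul_rpow (by positivity) hw0.le,
          Real.mul_rpow hv0.le hl.le]
    _ = (v ^ (-α) * ∏ j, (lam j) ^ (-(a j))) * z ^ α * ∏ j, (1 - c j * z) ^ (-(a j)) := by
        rw [Finset.prod_mul_distrib, Finset.prod_mul_distrib, Finset.prod_mul_distrib]
        rw [hzw, hα, ← Real.rpow_sum_of_pos hv0, ← Real.rpow_sum_of_pos hw0]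
        simp [Finset.sum_neg_distrib]
end
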